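/- Let g be a finite-dimensional real Lie algebra, h and l finite-dimensional real vector spaces, α̃ : h → g and β̃ : l → h linear maps, ▷ : g × h → h and ▷ : g × l → l bilinear Lie algebra actions, {,} : h × h → l a g-equivariant bilinear map (X ▷ {Y₁,Y₂} = {X ▷ Y₁, Y₂} + {Y₁, X ▷ Y₂}), with α̃(X ▷ Y) = [X, α̃(Y)] and β̃(X ▷ Z) = X ▷ β̃(Z). On an open set U ⊆ ℝ^d, let A be a smooth g-valued 1-form, B a smooth h-valued 2-form and C a smooth l-valued 3-form, and set Ω₁ := dA + ½ A ∧^{[,]} A, Ω₂ := dB + A ∧^▷ B, Ω₃ := dC + A ∧^▷ C + B ∧^{{,}} B. If the 3-connection (A, B, C) is fake-flat, i.e. Ω₁ = α̃ ∘ B and Ω₂ = β̃ ∘ C, then: (i) dΩ₁ + A ∧^{[,]} Ω₁ = 0; (ii) dΩ₂ + A ∧^▷ Ω₂ = Ω₁ ∧^▷ B; (iii) dΩ₃ + A ∧^▷ Ω₃ = Ω₁ ∧^▷ C + Ω₂ ∧^{{,}} B + B ∧^{{,}} Ω₂. -/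

import Mathlib

/-! Wedge product of vector-valued alternating forms along a bilinear map,
given by the shuffle-sum formula
`(ω ∧_μ η)(v₁,…,v_{k₁+k₂}) = Σ_σ sgn(σ) μ(ω(v_{σ(1)},…,v_{σ(k₁)}), η(v_{σ(k₁+1)},…,v_{σ(k₁+k₂)}))`,
the sum ranging over (k₁,k₂)-shuffles σ. -/

/-- The finset of (k₁,k₂)-shuffles: permutations of `Fin (k₁+k₂)` that are strictly
increasing on the first `k₁` indices and on the last `k₂` indices. -/
def shuffleSet (k₁ k₂ : ℕ) : Finset (Equiv.Perm (Fin (k₁ + k₂))) :=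
  Finset.univ.filter fun σ =>
    (∀ i j : Fin k₁, i < j → σ (Fin.castAdd k₂ i) < σ (Fin.castAdd k₂ j)) ∧
    (∀ i j : Fin k₂, i < j → σ (Fin.natAdd k₁ i) < σ (Fin.natAdd k₁ j))

/-- The wedge product along a bilinear map `μ : E →ₗ F →ₗ W`, defined on the underlying
functions of vector-valued forms by the shuffle-sum formula. -/
def wedgeRaw {V E F W : Type*} [AddCommGroup E] [Module ℝ E] [AddCommGroup F] [Module ℝ F]
    [AddCommGroup W] [Module ℝ W] {k₁ k₂ : ℕ}
    (μ : E →ₗ[ℝ] F →ₗ[ℝ] W)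
    (ω : (Fin k₁ → V) → E) (η : (Fin k₂ → V) → F) :
    (Fin (k₁ + k₂) → V) → W :=
  fun v => ∑ σ ∈ shuffleSet k₁ k₂,
    (Equiv.Perm.sign σ : ℤ) •
      μ (ω fun i => v (σ (Fin.castAdd k₂ i))) (η fun i => v (σ (Fin.natAdd k₁ i)))

/-- Reinterpret a `k`-form as a `k'`-form along an equality of degrees `k = k'`. -/
def castRaw {V W : Type*} {k k' : ℕ} (h : k = k') (ω : (Fin k → V) → W) :
    (Fin k' → V) → W :=
  fun v => ω fun i => v (Fin.cast h i)

/-! The exterior derivative of a smooth vector-valued differential form, given pointwise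
by `(dω)_x(v₀,…,v_k) = Σ_{i=0}^{k} (−1)^i (Dω(x)·v_i)(v₀,…,v̂ᵢ,…,v_k)`, where `D` is the
Fréchet derivative and `v̂ᵢ` denotes omission of the `i`-th vector. A smooth `W`-valued
differential `k`-form on an open set `U ⊆ ℝ^d` is a map `ω` from `ℝ^d` to the space of
`W`-valued alternating `k`-forms on `ℝ^d` which is smooth on `U`, smoothness being
expressed by requiring every evaluation `x ↦ ω x v` to be `C^∞` on `U`. -/

/-- The exterior derivative, defined on the underlying functions of vector-valued
differential forms via the Fréchet derivative. -/
noncomputable def extDerivRaw {X W : Type*} [NormedAddCommGroup X] [NormedSpace ℝ X]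
    [NormedAddCommGroup W] [NormedSpace ℝ W] {k : ℕ}
    (ω : X → (Fin k → X) → W) (x : X) : (Fin (k + 1) → X) → W :=
  fun v => ∑ i : Fin (k + 1),
    (-1 : ℤ) ^ (i : ℕ) • fderiv ℝ (fun y => ω y (v ∘ i.succAbove)) x (v i)

/-- A form-valued map is smooth on `U` iff all its evaluations are. -/
def SmoothFormOn {X E : Type*} [NormedAddCommGroup X] [NormedSpace ℝ X]
    [NormedAddCommGroup E] [NormedSpace ℝ E] {k : ℕ}
    (ω : X → AlternatingMap ℝ X E (Fin k)) (U : Set X) : Prop :=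
  ∀ v : Fin k → X, ContDiffOn ℝ (⊤ : ℕ∞) (fun x => ω x v) U

/-!
Each identity follows by expanding the curvatures and combining three kinds of facts about the
wedge product and the exterior derivative in low degrees: `d ∘ d = 0`, which comes from the
symmetry of second derivatives; the graded Leibniz rule `d (ω ∧ η) = dω ∧ η + (-1)^p ω ∧ dη`;
and the algebraic identities `A ∧ [A ∧ A] = 0` (Jacobi), `A ∧ (A ∧ η) = ½ [A ∧ A] ∧ η` (the
actions are Lie algebra actions) and `A ∧ {B ∧ B} = {(A ∧ B) ∧ B} + {B ∧ (A ∧ B)}`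
(equivariance of the Peiffer lifting). Each of these is checked by evaluating both sides on an
explicit tuple of vectors.
-/

section Tuples

variable {ι α : Type*} (v : ι → α)

theorem comp_fin_one (f : Fin 1 → ι) : v ∘ f = ![v (f 0)] := by
  ext i; fin_cases i; rfl

theorem comp_fin_two (f : Fin 2 → ι) : v ∘ f = ![v (f 0), v (f 1)] := by
  ext i; fin_cases i <;> rfl

theorem comp_fin_three (f : Fin 3 → ι) : v ∘ f = ![v (f 0), v (f 1), v (f 2)] := by
  ext i; fin_cases i <;> rfl

theorem comp_fin_four (f : Fin 4 → ι) : v ∘ f = ![v (f 0), v (f 1), v (f 2), v (f 3)] := by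
  ext i; fin_cases i <;> rfl

end Tuples

-- Evaluating `(shuffleSet k₁ k₂).image shuffleIndices` by `decide` gives the explicit
-- expansions of wedge products below.
def shuffleIndices {k₁ k₂ : ℕ} (σ : Equiv.Perm (Fin (k₁ + k₂))) :
    (Fin k₁ → Fin (k₁ + k₂)) × (Fin k₂ → Fin (k₁ + k₂)) × ℤˣ :=
  (σ ∘ Fin.castAdd k₂, σ ∘ Fin.natAdd k₁, Equiv.Perm.sign σ)

theorem shuffleIndices_injective {k₁ k₂ : ℕ} :
    Function.Injective (shuffleIndices (k₁ := k₁) (k₂ := k₂)) := by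
  intro σ τ h
  simp only [shuffleIndices, Prod.mk.injEq] at h
  ext i
  refine Fin.addCases (fun j => ?_) (fun j => ?_) i
  · exact congrArg Fin.val (congrFun h.1 j)
  · exact congrArg Fin.val (congrFun h.2.1 j)

section Wedge

variable {V E F W : Type*} [AddCommGroup E] [Module ℝ E] [AddCommGroup F] [Module ℝ F]
  [AddCommGroup W] [Module ℝ W] (μ : E →ₗ[ℝ] F →ₗ[ℝ] W)

theorem wedgeRaw_apply_eq_sum_shuffleIndices {k₁ k₂ : ℕ} (ω : (Fin k₁ → V) → E)
    (η : (Fin k₂ → V) → F) (v : Fin (k₁ + k₂) → V) :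
    wedgeRaw μ ω η v = ∑ t ∈ (shuffleSet k₁ k₂).image shuffleIndices,
      (t.2.2 : ℤ) • μ (ω (v ∘ t.1)) (η (v ∘ t.2.1)) := by
  rw [Finset.sum_image shuffleIndices_injective.injOn]
  rfl

theorem wedgeRaw_one_one_apply (ω : (Fin 1 → V) → E) (η : (Fin 1 → V) → F) (v : Fin 2 → V) :
    wedgeRaw μ ω η v = μ (ω ![v 0]) (η ![v 1]) - μ (ω ![v 1]) (η ![v 0]) := by
  rw [wedgeRaw_apply_eq_sum_shuffleIndices,
    show (shuffleSet 1 1).image shuffleIndices =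
      [(![0], ![1], 1), (![1], ![0], -1)].toFinset by decide,
    List.sum_toFinset _ (by decide)]
  simp [comp_fin_one, sub_eq_add_neg]

theorem wedgeRaw_one_two_apply (ω : (Fin 1 → V) → E) (η : (Fin 2 → V) → F) (v : Fin 3 → V) :
    wedgeRaw μ ω η v = μ (ω ![v 0]) (η ![v 1, v 2]) - μ (ω ![v 1]) (η ![v 0, v 2])
      + μ (ω ![v 2]) (η ![v 0, v 1]) := by
  rw [wedgeRaw_apply_eq_sum_shuffleIndices,
    show (shuffleSet 1 2).image shuffleIndices =
      [(![0], ![1, 2], 1), (![1], ![0, 2], -1), (![2], ![0, 1], 1)].toFinset by decide,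
    List.sum_toFinset _ (by decide)]
  simp [comp_fin_one, comp_fin_two, sub_eq_add_neg, add_assoc]

theorem wedgeRaw_two_one_apply (ω : (Fin 2 → V) → E) (η : (Fin 1 → V) → F) (v : Fin 3 → V) :
    wedgeRaw μ ω η v = μ (ω ![v 0, v 1]) (η ![v 2]) - μ (ω ![v 0, v 2]) (η ![v 1])
      + μ (ω ![v 1, v 2]) (η ![v 0]) := by
  rw [wedgeRaw_apply_eq_sum_shuffleIndices,
    show (shuffleSet 2 1).image shuffleIndices =
      [(![0, 1], ![2], 1), (![0, 2], ![1], -1), (![1, 2], ![0], 1)].toFinset by decide,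
    List.sum_toFinset _ (by decide)]
  simp [comp_fin_one, comp_fin_two, sub_eq_add_neg, add_assoc]

theorem wedgeRaw_one_three_apply (ω : (Fin 1 → V) → E) (η : (Fin 3 → V) → F)
    (v : Fin 4 → V) :
    wedgeRaw μ ω η v = μ (ω ![v 0]) (η ![v 1, v 2, v 3]) - μ (ω ![v 1]) (η ![v 0, v 2, v 3])
      + μ (ω ![v 2]) (η ![v 0, v 1, v 3]) - μ (ω ![v 3]) (η ![v 0, v 1, v 2]) := by
  rw [wedgeRaw_apply_eq_sum_shuffleIndices,
    show (shuffleSet 1 3).image shuffleIndices =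
      [(![0], ![1, 2, 3], 1), (![1], ![0, 2, 3], -1), (![2], ![0, 1, 3], 1),
       (![3], ![0, 1, 2], -1)].toFinset by decide,
    List.sum_toFinset _ (by decide)]
  simp [comp_fin_one, comp_fin_three, sub_eq_add_neg, add_assoc]

theorem wedgeRaw_two_two_apply (ω : (Fin 2 → V) → E) (η : (Fin 2 → V) → F) (v : Fin 4 → V) :
    wedgeRaw μ ω η v = μ (ω ![v 0, v 1]) (η ![v 2, v 3]) - μ (ω ![v 0, v 2]) (η ![v 1, v 3])
      + μ (ω ![v 0, v 3]) (η ![v 1, v 2]) + μ (ω ![v 1, v 2]) (η ![v 0, v 3])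
      - μ (ω ![v 1, v 3]) (η ![v 0, v 2]) + μ (ω ![v 2, v 3]) (η ![v 0, v 1]) := by
  rw [wedgeRaw_apply_eq_sum_shuffleIndices,
    show (shuffleSet 2 2).image shuffleIndices =
      [(![0, 1], ![2, 3], 1), (![0, 2], ![1, 3], -1), (![0, 3], ![1, 2], 1),
       (![1, 2], ![0, 3], 1), (![1, 3], ![0, 2], -1), (![2, 3], ![0, 1], 1)].toFinset by decide,
    List.sum_toFinset _ (by decide)]
  simp [comp_fin_two, sub_eq_add_neg, add_assoc]

theorem wedgeRaw_one_four_apply (ω : (Fin 1 → V) → E) (η : (Fin 4 → V) → F)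
    (v : Fin 5 → V) :
    wedgeRaw μ ω η v = μ (ω ![v 0]) (η ![v 1, v 2, v 3, v 4])
      - μ (ω ![v 1]) (η ![v 0, v 2, v 3, v 4]) + μ (ω ![v 2]) (η ![v 0, v 1, v 3, v 4])
      - μ (ω ![v 3]) (η ![v 0, v 1, v 2, v 4]) + μ (ω ![v 4]) (η ![v 0, v 1, v 2, v 3]) := by
  rw [wedgeRaw_apply_eq_sum_shuffleIndices,
    show (shuffleSet 1 4).image shuffleIndices =
      [(![0], ![1, 2, 3, 4], 1), (![1], ![0, 2, 3, 4], -1), (![2], ![0, 1, 3, 4], 1),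
       (![3], ![0, 1, 2, 4], -1), (![4], ![0, 1, 2, 3], 1)].toFinset by decide,
    List.sum_toFinset _ (by decide)]
  simp [comp_fin_one, comp_fin_four, sub_eq_add_neg, add_assoc]

theorem wedgeRaw_two_three_apply (ω : (Fin 2 → V) → E) (η : (Fin 3 → V) → F)
    (v : Fin 5 → V) :
    wedgeRaw μ ω η v = μ (ω ![v 0, v 1]) (η ![v 2, v 3, v 4])
      - μ (ω ![v 0, v 2]) (η ![v 1, v 3, v 4]) + μ (ω ![v 0, v 3]) (η ![v 1, v 2, v 4])
      - μ (ω ![v 0, v 4]) (η ![v 1, v 2, v 3]) + μ (ω ![v 1, v 2]) (η ![v 0, v 3, v 4])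
      - μ (ω ![v 1, v 3]) (η ![v 0, v 2, v 4]) + μ (ω ![v 1, v 4]) (η ![v 0, v 2, v 3])
      + μ (ω ![v 2, v 3]) (η ![v 0, v 1, v 4]) - μ (ω ![v 2, v 4]) (η ![v 0, v 1, v 3])
      + μ (ω ![v 3, v 4]) (η ![v 0, v 1, v 2]) := by
  rw [wedgeRaw_apply_eq_sum_shuffleIndices,
    show (shuffleSet 2 3).image shuffleIndices =
      [(![0, 1], ![2, 3, 4], 1), (![0, 2], ![1, 3, 4], -1), (![0, 3], ![1, 2, 4], 1),
       (![0, 4], ![1, 2, 3], -1), (![1, 2], ![0, 3, 4], 1), (![1, 3], ![0, 2, 4], -1),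
       (![1, 4], ![0, 2, 3], 1), (![2, 3], ![0, 1, 4], 1), (![2, 4], ![0, 1, 3], -1),
       (![3, 4], ![0, 1, 2], 1)].toFinset by decide,
    List.sum_toFinset _ (by decide)]
  simp [comp_fin_two, comp_fin_three, sub_eq_add_neg, add_assoc]

theorem wedgeRaw_three_two_apply (ω : (Fin 3 → V) → E) (η : (Fin 2 → V) → F)
    (v : Fin 5 → V) :
    wedgeRaw μ ω η v = μ (ω ![v 0, v 1, v 2]) (η ![v 3, v 4])
      - μ (ω ![v 0, v 1, v 3]) (η ![v 2, v 4]) + μ (ω ![v 0, v 1, v 4]) (η ![v 2, v 3])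
      + μ (ω ![v 0, v 2, v 3]) (η ![v 1, v 4]) - μ (ω ![v 0, v 2, v 4]) (η ![v 1, v 3])
      + μ (ω ![v 0, v 3, v 4]) (η ![v 1, v 2]) - μ (ω ![v 1, v 2, v 3]) (η ![v 0, v 4])
      + μ (ω ![v 1, v 2, v 4]) (η ![v 0, v 3]) - μ (ω ![v 1, v 3, v 4]) (η ![v 0, v 2])
      + μ (ω ![v 2, v 3, v 4]) (η ![v 0, v 1]) := by
  rw [wedgeRaw_apply_eq_sum_shuffleIndices,
    show (shuffleSet 3 2).image shuffleIndices =
      [(![0, 1, 2], ![3, 4], 1), (![0, 1, 3], ![2, 4], -1), (![0, 1, 4], ![2, 3], 1),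
       (![0, 2, 3], ![1, 4], 1), (![0, 2, 4], ![1, 3], -1), (![0, 3, 4], ![1, 2], 1),
       (![1, 2, 3], ![0, 4], -1), (![1, 2, 4], ![0, 3], 1), (![1, 3, 4], ![0, 2], -1),
       (![2, 3, 4], ![0, 1], 1)].toFinset by decide,
    List.sum_toFinset _ (by decide)]
  simp [comp_fin_two, comp_fin_three, sub_eq_add_neg, add_assoc]

theorem wedgeRaw_add_left {k₁ k₂ : ℕ} (ω ω' : (Fin k₁ → V) → E) (η : (Fin k₂ → V) → F) :
    wedgeRaw μ (ω + ω') η = wedgeRaw μ ω η + wedgeRaw μ ω' η := by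
  funext v
  simp only [wedgeRaw, Pi.add_apply, map_add, LinearMap.add_apply, smul_add,
    Finset.sum_add_distrib]

theorem wedgeRaw_add_right {k₁ k₂ : ℕ} (ω : (Fin k₁ → V) → E) (η η' : (Fin k₂ → V) → F) :
    wedgeRaw μ ω (η + η') = wedgeRaw μ ω η + wedgeRaw μ ω η' := by
  funext v
  simp only [wedgeRaw, Pi.add_apply, map_add, smul_add, Finset.sum_add_distrib]

theorem wedgeRaw_smul_left {k₁ k₂ : ℕ} (c : ℝ) (ω : (Fin k₁ → V) → E)
    (η : (Fin k₂ → V) → F) : wedgeRaw μ (c • ω) η = c • wedgeRaw μ ω η := by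
  funext v
  simp only [wedgeRaw, Pi.smul_apply, map_smul, LinearMap.smul_apply, Finset.smul_sum,
    smul_comm c]

theorem wedgeRaw_smul_right {k₁ k₂ : ℕ} (c : ℝ) (ω : (Fin k₁ → V) → E)
    (η : (Fin k₂ → V) → F) : wedgeRaw μ ω (c • η) = c • wedgeRaw μ ω η := by
  funext v
  simp only [wedgeRaw, Pi.smul_apply, map_smul, Finset.smul_sum, smul_comm c]

end Wedge

section ExtDerivExpansion

variable {X W : Type*} [NormedAddCommGroup X] [NormedSpace ℝ X]
  [NormedAddCommGroup W] [NormedSpace ℝ W]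

theorem extDerivRaw_one_apply (ω : X → (Fin 1 → X) → W) (x : X) (v : Fin 2 → X) :
    extDerivRaw ω x v = fderiv ℝ (fun y => ω y ![v 1]) x (v 0)
      - fderiv ℝ (fun y => ω y ![v 0]) x (v 1) := by
  simp [extDerivRaw, Fin.sum_univ_succ, comp_fin_one, Fin.succAbove, sub_eq_add_neg]

theorem extDerivRaw_two_apply (ω : X → (Fin 2 → X) → W) (x : X) (v : Fin 3 → X) :
    extDerivRaw ω x v = fderiv ℝ (fun y => ω y ![v 1, v 2]) x (v 0)
      - fderiv ℝ (fun y => ω y ![v 0, v 2]) x (v 1)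
      + fderiv ℝ (fun y => ω y ![v 0, v 1]) x (v 2) := by
  simp [extDerivRaw, Fin.sum_univ_succ, comp_fin_two, Fin.succAbove, sub_eq_add_neg,
    add_assoc]

theorem extDerivRaw_three_apply (ω : X → (Fin 3 → X) → W) (x : X) (v : Fin 4 → X) :
    extDerivRaw ω x v = fderiv ℝ (fun y => ω y ![v 1, v 2, v 3]) x (v 0)
      - fderiv ℝ (fun y => ω y ![v 0, v 2, v 3]) x (v 1)
      + fderiv ℝ (fun y => ω y ![v 0, v 1, v 3]) x (v 2)
      - fderiv ℝ (fun y => ω y ![v 0, v 1, v 2]) x (v 3) := by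
  simp [extDerivRaw, Fin.sum_univ_succ, comp_fin_three, Fin.succAbove, sub_eq_add_neg,
    add_assoc]

theorem extDerivRaw_four_apply (ω : X → (Fin 4 → X) → W) (x : X) (v : Fin 5 → X) :
    extDerivRaw ω x v = fderiv ℝ (fun y => ω y ![v 1, v 2, v 3, v 4]) x (v 0)
      - fderiv ℝ (fun y => ω y ![v 0, v 2, v 3, v 4]) x (v 1)
      + fderiv ℝ (fun y => ω y ![v 0, v 1, v 3, v 4]) x (v 2)
      - fderiv ℝ (fun y => ω y ![v 0, v 1, v 2, v 4]) x (v 3)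
      + fderiv ℝ (fun y => ω y ![v 0, v 1, v 2, v 3]) x (v 4) := by
  simp [extDerivRaw, Fin.sum_univ_succ, comp_fin_four, Fin.succAbove, sub_eq_add_neg,
    add_assoc]

end ExtDerivExpansion

section Calculus

variable {X E F W : Type*} [NormedAddCommGroup X] [NormedSpace ℝ X]
  [NormedAddCommGroup E] [NormedSpace ℝ E] [NormedAddCommGroup F] [NormedSpace ℝ F]
  [NormedAddCommGroup W] [NormedSpace ℝ W] {x : X}

theorem ContDiffAt.differentiableAt_fderiv_apply {f : X → W} (hf : ContDiffAt ℝ 2 f x)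
    (u : X) : DifferentiableAt ℝ (fun y => fderiv ℝ f y u) x :=
  ((hf.fderiv_right (m := 1) (by norm_num)).differentiableAt one_ne_zero).clm_apply
    (differentiableAt_const u)

theorem ContDiffAt.fderiv_fderiv_apply_comm {f : X → W} (hf : ContDiffAt ℝ 2 f x) (u t : X) :
    fderiv ℝ (fun y => fderiv ℝ f y u) x t = fderiv ℝ (fun y => fderiv ℝ f y t) x u := by
  have hf' := (hf.fderiv_right (m := 1) (by norm_num)).differentiableAt one_ne_zero
  rw [fderiv_clm_apply hf' (differentiableAt_const u),
    fderiv_clm_apply hf' (differentiableAt_const t)]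
  simpa using hf.isSymmSndFDerivAt (by simp) t u

section Bilinear

variable [FiniteDimensional ℝ E] [FiniteDimensional ℝ F] (μ : E →ₗ[ℝ] F →ₗ[ℝ] W)

theorem differentiableAt_bilinear {f : X → E} {g : X → F} (hf : DifferentiableAt ℝ f x)
    (hg : DifferentiableAt ℝ g x) : DifferentiableAt ℝ (fun y => μ (f y) (g y)) x :=
  (μ.toContinuousBilinearMap.hasFDerivAt_of_bilinear hf.hasFDerivAt
    hg.hasFDerivAt).differentiableAt

theorem fderiv_bilinear_apply {f : X → E} {g : X → F} (hf : DifferentiableAt ℝ f x)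
    (hg : DifferentiableAt ℝ g x) (t : X) :
    fderiv ℝ (fun y => μ (f y) (g y)) x t
      = μ (fderiv ℝ f x t) (g x) + μ (f x) (fderiv ℝ g x t) := by
  rw [show (fun y => μ (f y) (g y)) = fun y => μ.toContinuousBilinearMap (f y) (g y) from rfl,
    μ.toContinuousBilinearMap.fderiv_of_bilinear hf hg, add_comm]
  rfl

variable {k₁ k₂ : ℕ} {φ : X → (Fin k₁ → X) → E} {ψ : X → (Fin k₂ → X) → F}

theorem differentiableAt_wedgeRaw (hφ : ∀ w, DifferentiableAt ℝ (fun y => φ y w) x)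
    (hψ : ∀ w, DifferentiableAt ℝ (fun y => ψ y w) x) (v : Fin (k₁ + k₂) → X) :
    DifferentiableAt ℝ (fun y => wedgeRaw μ (φ y) (ψ y) v) x :=
  .fun_sum fun _ _ => (differentiableAt_bilinear μ (hφ _) (hψ _)).fun_const_smul _

theorem fderiv_wedgeRaw_apply (hφ : ∀ w, DifferentiableAt ℝ (fun y => φ y w) x)
    (hψ : ∀ w, DifferentiableAt ℝ (fun y => ψ y w) x) (v : Fin (k₁ + k₂) → X) (t : X) :
    fderiv ℝ (fun y => wedgeRaw μ (φ y) (ψ y) v) x t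
      = wedgeRaw μ (fun w => fderiv ℝ (fun y => φ y w) x t) (ψ x) v
        + wedgeRaw μ (φ x) (fun w => fderiv ℝ (fun y => ψ y w) x t) v := by
  simp only [wedgeRaw]
  rw [fderiv_fun_sum fun _ _ => (differentiableAt_bilinear μ (hφ _) (hψ _)).fun_const_smul _,
    FunLike.coe_sum, Finset.sum_apply, ← Finset.sum_add_distrib]
  refine Finset.sum_congr rfl fun _ _ => ?_
  rw [fderiv_fun_const_smul (differentiableAt_bilinear μ (hφ _) (hψ _)), FunLike.coe_smul,
    Pi.smul_apply, fderiv_bilinear_apply μ (hφ _) (hψ _), smul_add]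

end Bilinear

variable {k : ℕ} {ω : X → (Fin k → X) → W}

theorem differentiableAt_extDerivRaw
    (hω : ∀ w u, DifferentiableAt ℝ (fun y => fderiv ℝ (fun z => ω z w) y u) x)
    (v : Fin (k + 1) → X) : DifferentiableAt ℝ (fun y => extDerivRaw ω y v) x :=
  .fun_sum fun _ _ => (hω _ _).fun_const_smul _

theorem fderiv_extDerivRaw_apply
    (hω : ∀ w u, DifferentiableAt ℝ (fun y => fderiv ℝ (fun z => ω z w) y u) x)
    (v : Fin (k + 1) → X) (t : X) :
    fderiv ℝ (fun y => extDerivRaw ω y v) x t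
      = ∑ i : Fin (k + 1), (-1 : ℤ) ^ (i : ℕ) •
          fderiv ℝ (fun y => fderiv ℝ (fun z => ω z (v ∘ i.succAbove)) y (v i)) x t := by
  simp only [extDerivRaw]
  rw [fderiv_fun_sum fun _ _ => (hω _ _).fun_const_smul _, FunLike.coe_sum, Finset.sum_apply]
  refine Finset.sum_congr rfl fun i _ => ?_
  rw [fderiv_fun_const_smul (hω _ _)]
  rfl

theorem extDerivRaw_add {ω' : X → (Fin k → X) → W}
    (hω : ∀ w, DifferentiableAt ℝ (fun y => ω y w) x)
    (hω' : ∀ w, DifferentiableAt ℝ (fun y => ω' y w) x) :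
    extDerivRaw (fun y => ω y + ω' y) x = extDerivRaw ω x + extDerivRaw ω' x := by
  funext v
  simp only [extDerivRaw, Pi.add_apply, ← Finset.sum_add_distrib]
  refine Finset.sum_congr rfl fun i _ => ?_
  rw [fderiv_fun_add (hω _) (hω' _), add_apply, smul_add]

theorem extDerivRaw_smul (c : ℝ) (hω : ∀ w, DifferentiableAt ℝ (fun y => ω y w) x) :
    extDerivRaw (fun y => c • ω y) x = c • extDerivRaw ω x := by
  funext v
  simp only [extDerivRaw, Pi.smul_apply, Finset.smul_sum]
  refine Finset.sum_congr rfl fun i _ => ?_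
  rw [fderiv_fun_const_smul (hω _) c, FunLike.coe_smul, Pi.smul_apply, smul_comm]

end Calculus

section ExtDerivExtDeriv

variable {X W : Type*} [NormedAddCommGroup X] [NormedSpace ℝ X]
  [NormedAddCommGroup W] [NormedSpace ℝ W] {x : X}

theorem fderiv_extDerivRaw_apply_eq_extDerivRaw_fderiv {k : ℕ} {ω : X → (Fin k → X) → W}
    (hω : ∀ w, ContDiffAt ℝ 2 (fun y => ω y w) x) (v : Fin (k + 1) → X) (t : X) :
    fderiv ℝ (fun y => extDerivRaw ω y v) x t
      = extDerivRaw (fun y w => fderiv ℝ (fun z => ω z w) y t) x v := by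
  rw [fderiv_extDerivRaw_apply fun w u => (hω w).differentiableAt_fderiv_apply u]
  exact Finset.sum_congr rfl fun i _ => by rw [(hω _).fderiv_fderiv_apply_comm]

theorem extDerivRaw_extDerivRaw_one {ω : X → (Fin 1 → X) → W}
    (hω : ∀ w, ContDiffAt ℝ 2 (fun y => ω y w) x) : extDerivRaw (extDerivRaw ω) x = 0 := by
  funext v
  simp only [extDerivRaw_two_apply, fderiv_extDerivRaw_apply_eq_extDerivRaw_fderiv hω]
  simp only [Fin.isValue, extDerivRaw_one_apply, Matrix.cons_val_one, Matrix.cons_val_fin_one,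
    Matrix.cons_val_zero, Pi.zero_apply]
  simp only [fun w => (hω w).fderiv_fderiv_apply_comm]
  abel

theorem extDerivRaw_extDerivRaw_two {ω : X → (Fin 2 → X) → W}
    (hω : ∀ w, ContDiffAt ℝ 2 (fun y => ω y w) x) : extDerivRaw (extDerivRaw ω) x = 0 := by
  funext v
  simp only [extDerivRaw_three_apply, fderiv_extDerivRaw_apply_eq_extDerivRaw_fderiv hω]
  simp only [Fin.isValue, extDerivRaw_two_apply, Matrix.cons_val_one, Matrix.cons_val_zero,
    Matrix.cons_val, Pi.zero_apply]
  simp only [fun w => (hω w).fderiv_fderiv_apply_comm]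
  abel

theorem extDerivRaw_extDerivRaw_three {ω : X → (Fin 3 → X) → W}
    (hω : ∀ w, ContDiffAt ℝ 2 (fun y => ω y w) x) : extDerivRaw (extDerivRaw ω) x = 0 := by
  funext v
  simp only [extDerivRaw_four_apply, fderiv_extDerivRaw_apply_eq_extDerivRaw_fderiv hω]
  simp only [Fin.isValue, extDerivRaw_three_apply, Matrix.cons_val_one, Matrix.cons_val_zero,
    Matrix.cons_val, Pi.zero_apply]
  simp only [fun w => (hω w).fderiv_fderiv_apply_comm]
  abel

end ExtDerivExtDeriv

section Leibniz

variable {X E F W : Type*} [NormedAddCommGroup X] [NormedSpace ℝ X]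
  [NormedAddCommGroup E] [NormedSpace ℝ E] [FiniteDimensional ℝ E]
  [NormedAddCommGroup F] [NormedSpace ℝ F] [FiniteDimensional ℝ F]
  [NormedAddCommGroup W] [NormedSpace ℝ W] (μ : E →ₗ[ℝ] F →ₗ[ℝ] W) {x : X}

theorem extDerivRaw_wedgeRaw_one_one {φ : X → (Fin 1 → X) → E} {ψ : X → (Fin 1 → X) → F}
    (hφ : ∀ w, DifferentiableAt ℝ (fun y => φ y w) x)
    (hψ : ∀ w, DifferentiableAt ℝ (fun y => ψ y w) x) :
    extDerivRaw (fun y => wedgeRaw μ (φ y) (ψ y)) x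
      = wedgeRaw μ (extDerivRaw φ x) (ψ x) - wedgeRaw μ (φ x) (extDerivRaw ψ x) := by
  funext v
  simp only [extDerivRaw_two_apply, fderiv_wedgeRaw_apply μ hφ hψ]
  simp only [Fin.isValue, wedgeRaw_one_one_apply, Matrix.cons_val_zero, Matrix.cons_val_one,
    Matrix.cons_val_fin_one, Nat.reduceAdd, Pi.sub_apply, wedgeRaw_two_one_apply,
    extDerivRaw_one_apply, map_sub, LinearMap.sub_apply, wedgeRaw_one_two_apply]
  abel

theorem extDerivRaw_wedgeRaw_one_two {φ : X → (Fin 1 → X) → E} {ψ : X → (Fin 2 → X) → F}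
    (hφ : ∀ w, DifferentiableAt ℝ (fun y => φ y w) x)
    (hψ : ∀ w, DifferentiableAt ℝ (fun y => ψ y w) x) :
    extDerivRaw (fun y => wedgeRaw μ (φ y) (ψ y)) x
      = wedgeRaw μ (extDerivRaw φ x) (ψ x) - wedgeRaw μ (φ x) (extDerivRaw ψ x) := by
  funext v
  simp only [extDerivRaw_three_apply, fderiv_wedgeRaw_apply μ hφ hψ]
  simp only [Fin.isValue, wedgeRaw_one_two_apply, Matrix.cons_val_zero, Matrix.cons_val_one,
    Matrix.cons_val, Nat.reduceAdd, Pi.sub_apply, wedgeRaw_two_two_apply, extDerivRaw_one_apply,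
    Matrix.cons_val_fin_one, map_sub, LinearMap.sub_apply, wedgeRaw_one_three_apply,
    extDerivRaw_two_apply, map_add]
  abel

theorem extDerivRaw_wedgeRaw_one_three {φ : X → (Fin 1 → X) → E} {ψ : X → (Fin 3 → X) → F}
    (hφ : ∀ w, DifferentiableAt ℝ (fun y => φ y w) x)
    (hψ : ∀ w, DifferentiableAt ℝ (fun y => ψ y w) x) :
    extDerivRaw (fun y => wedgeRaw μ (φ y) (ψ y)) x
      = wedgeRaw μ (extDerivRaw φ x) (ψ x) - wedgeRaw μ (φ x) (extDerivRaw ψ x) := by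
  funext v
  simp only [extDerivRaw_four_apply, fderiv_wedgeRaw_apply μ hφ hψ]
  simp only [Fin.isValue, wedgeRaw_one_three_apply, Matrix.cons_val_zero, Matrix.cons_val_one,
    Matrix.cons_val, Nat.reduceAdd, Pi.sub_apply, wedgeRaw_two_three_apply, extDerivRaw_one_apply,
    Matrix.cons_val_fin_one, map_sub, LinearMap.sub_apply, wedgeRaw_one_four_apply,
    extDerivRaw_three_apply, map_add]
  abel

theorem extDerivRaw_wedgeRaw_two_two {φ : X → (Fin 2 → X) → E} {ψ : X → (Fin 2 → X) → F}
    (hφ : ∀ w, DifferentiableAt ℝ (fun y => φ y w) x)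
    (hψ : ∀ w, DifferentiableAt ℝ (fun y => ψ y w) x) :
    extDerivRaw (fun y => wedgeRaw μ (φ y) (ψ y)) x
      = wedgeRaw μ (extDerivRaw φ x) (ψ x) + wedgeRaw μ (φ x) (extDerivRaw ψ x) := by
  funext v
  simp only [extDerivRaw_four_apply, fderiv_wedgeRaw_apply μ hφ hψ]
  simp only [Fin.isValue, wedgeRaw_two_two_apply, Matrix.cons_val_zero, Matrix.cons_val_one,
    Matrix.cons_val, Nat.reduceAdd, Pi.add_apply, wedgeRaw_three_two_apply, extDerivRaw_two_apply,
    map_add, map_sub, LinearMap.add_apply, LinearMap.sub_apply, wedgeRaw_two_three_apply]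
  abel

end Leibniz

section Algebra

variable {V E W g h l : Type*} [AddCommGroup E] [Module ℝ E] [AddCommGroup W] [Module ℝ W]
  [AddCommGroup g] [Module ℝ g] [AddCommGroup h] [Module ℝ h] [AddCommGroup l] [Module ℝ l]
  {br : g →ₗ[ℝ] g →ₗ[ℝ] g} {ρ : g →ₗ[ℝ] h →ₗ[ℝ] h}

theorem wedgeRaw_two_one_eq_neg_of_isAlt {μ : E →ₗ[ℝ] E →ₗ[ℝ] W} (hμ : μ.IsAlt)
    (ω : (Fin 2 → V) → E) (a : (Fin 1 → V) → E) : wedgeRaw μ ω a = -wedgeRaw μ a ω := by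
  funext v
  simp only [wedgeRaw_two_one_apply, wedgeRaw_one_two_apply, Pi.neg_apply, ← hμ.neg (a _)]
  abel

theorem wedgeRaw_wedgeRaw_self_eq_zero (hbr : br.IsAlt)
    (hjac : ∀ X Y Z : g, br X (br Y Z) = br (br X Y) Z + br Y (br X Z))
    (a : (Fin 1 → V) → g) : wedgeRaw br a (wedgeRaw br a a) = 0 := by
  funext v
  simp only [wedgeRaw_one_two_apply, wedgeRaw_one_one_apply, Matrix.cons_val_zero,
    Matrix.cons_val_one, map_sub, Pi.zero_apply]
  rw [← hbr.neg (a ![v 1]) (a ![v 2]), ← hbr.neg (a ![v 0]) (a ![v 2]),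
    ← hbr.neg (a ![v 0]) (a ![v 1])]
  simp only [map_neg]
  rw [hjac (a ![v 0]) (a ![v 1]) (a ![v 2]), ← hbr.neg (br (a ![v 0]) (a ![v 1])) (a ![v 2])]
  abel

theorem wedgeRaw_wedgeRaw_two_of_action
    (hρ : ∀ (X X' : g) (Y : h), ρ (br X X') Y = ρ X (ρ X' Y) - ρ X' (ρ X Y))
    (a : (Fin 1 → V) → g) (b : (Fin 2 → V) → h) :
    wedgeRaw ρ a (wedgeRaw ρ a b) = (2 : ℝ)⁻¹ • wedgeRaw ρ (wedgeRaw br a a) b := by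
  funext v
  simp only [Nat.reduceAdd, wedgeRaw_one_three_apply, Fin.isValue, wedgeRaw_one_two_apply,
    Matrix.cons_val_zero, Matrix.cons_val_one, Matrix.cons_val, map_add, map_sub, Pi.smul_apply,
    wedgeRaw_two_two_apply, wedgeRaw_one_one_apply, Matrix.cons_val_fin_one, LinearMap.sub_apply,
    hρ, smul_add]
  module

theorem wedgeRaw_wedgeRaw_three_of_action
    (hρ : ∀ (X X' : g) (Y : h), ρ (br X X') Y = ρ X (ρ X' Y) - ρ X' (ρ X Y))
    (a : (Fin 1 → V) → g) (c : (Fin 3 → V) → h) :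
    wedgeRaw ρ a (wedgeRaw ρ a c) = (2 : ℝ)⁻¹ • wedgeRaw ρ (wedgeRaw br a a) c := by
  funext v
  simp only [Nat.reduceAdd, wedgeRaw_one_four_apply, Fin.isValue, wedgeRaw_one_three_apply,
    Matrix.cons_val_zero, Matrix.cons_val_one, Matrix.cons_val, map_sub, map_add, Pi.smul_apply,
    wedgeRaw_two_three_apply, wedgeRaw_one_one_apply, Matrix.cons_val_fin_one, LinearMap.sub_apply,
    hρ, smul_add]
  module

theorem wedgeRaw_wedgeRaw_of_derivation {ρl : g →ₗ[ℝ] l →ₗ[ℝ] l} {μ : h →ₗ[ℝ] h →ₗ[ℝ] l}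
    (hμ : ∀ (X : g) (Y₁ Y₂ : h), ρl X (μ Y₁ Y₂) = μ (ρ X Y₁) Y₂ + μ Y₁ (ρ X Y₂))
    (a : (Fin 1 → V) → g) (b b' : (Fin 2 → V) → h) :
    wedgeRaw ρl a (wedgeRaw μ b b')
      = wedgeRaw μ (wedgeRaw ρ a b) b' + wedgeRaw μ b (wedgeRaw ρ a b') := by
  funext v
  simp only [Nat.reduceAdd, wedgeRaw_one_four_apply, Fin.isValue, wedgeRaw_two_two_apply,
    Matrix.cons_val_zero, Matrix.cons_val_one, Matrix.cons_val, map_add, map_sub, hμ, Pi.add_apply,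
    wedgeRaw_three_two_apply, wedgeRaw_one_two_apply, LinearMap.add_apply, LinearMap.sub_apply,
    wedgeRaw_two_three_apply]
  abel

end Algebra

theorem SmoothFormOn.contDiffAt {X E : Type*} [NormedAddCommGroup X] [NormedSpace ℝ X]
    [NormedAddCommGroup E] [NormedSpace ℝ E] {k : ℕ} {ω : X → AlternatingMap ℝ X E (Fin k)}
    {U : Set X} (hω : SmoothFormOn ω U) (hU : IsOpen U) {x : X} (hx : x ∈ U)
    (w : Fin k → X) : ContDiffAt ℝ 2 (fun y => ω y w) x :=
  ((hω w).contDiffAt (hU.mem_nhds hx)).of_le (WithTop.coe_le_coe.2 le_top)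

section Bianchi

variable {X g h l : Type*} [NormedAddCommGroup X] [NormedSpace ℝ X]
  [NormedAddCommGroup g] [NormedSpace ℝ g] [FiniteDimensional ℝ g]
  [NormedAddCommGroup h] [NormedSpace ℝ h] [FiniteDimensional ℝ h]
  [NormedAddCommGroup l] [NormedSpace ℝ l] [FiniteDimensional ℝ l]
  {br : g →ₗ[ℝ] g →ₗ[ℝ] g} {x : X} {A : X → (Fin 1 → X) → g} {Ω₁ : X → (Fin 2 → X) → g}

theorem bianchi_identity_one (hbr : br.IsAlt)
    (hjac : ∀ X Y Z : g, br X (br Y Z) = br (br X Y) Z + br Y (br X Z))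
    (hA : ∀ w, ContDiffAt ℝ 2 (fun y => A y w) x)
    (hΩ₁ : ∀ y, Ω₁ y = extDerivRaw A y + (2 : ℝ)⁻¹ • wedgeRaw br (A y) (A y)) :
    extDerivRaw Ω₁ x + wedgeRaw br (A x) (Ω₁ x) = 0 := by
  obtain rfl : Ω₁ = _ := funext hΩ₁
  have hA₁ w := (hA w).differentiableAt two_ne_zero
  have hAA := differentiableAt_wedgeRaw br hA₁ hA₁
  rw [extDerivRaw_add (ω' := fun y => (2 : ℝ)⁻¹ • wedgeRaw br (A y) (A y))
      (differentiableAt_extDerivRaw fun w u => (hA w).differentiableAt_fderiv_apply u)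
      fun w => (hAA w).fun_const_smul _,
    extDerivRaw_smul _ hAA, extDerivRaw_extDerivRaw_one hA,
    extDerivRaw_wedgeRaw_one_one br hA₁ hA₁, wedgeRaw_add_right, wedgeRaw_smul_right,
    wedgeRaw_wedgeRaw_self_eq_zero hbr hjac, wedgeRaw_two_one_eq_neg_of_isAlt hbr]
  module

theorem bianchi_identity_two {ρ : g →ₗ[ℝ] h →ₗ[ℝ] h}
    (hρ : ∀ (X X' : g) (Y : h), ρ (br X X') Y = ρ X (ρ X' Y) - ρ X' (ρ X Y))
    {B : X → (Fin 2 → X) → h} {Ω₂ : X → (Fin 3 → X) → h}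
    (hA : ∀ w, DifferentiableAt ℝ (fun y => A y w) x)
    (hB : ∀ w, ContDiffAt ℝ 2 (fun y => B y w) x)
    (hΩ₁ : ∀ y, Ω₁ y = extDerivRaw A y + (2 : ℝ)⁻¹ • wedgeRaw br (A y) (A y))
    (hΩ₂ : ∀ y, Ω₂ y = extDerivRaw B y + wedgeRaw ρ (A y) (B y)) :
    extDerivRaw Ω₂ x + wedgeRaw ρ (A x) (Ω₂ x) = wedgeRaw ρ (Ω₁ x) (B x) := by
  obtain rfl : Ω₂ = _ := funext hΩ₂
  have hB₁ w := (hB w).differentiableAt two_ne_zero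
  have hAB := differentiableAt_wedgeRaw ρ hA hB₁
  rw [hΩ₁, extDerivRaw_add
      (differentiableAt_extDerivRaw fun w u => (hB w).differentiableAt_fderiv_apply u) hAB,
    extDerivRaw_extDerivRaw_two hB, extDerivRaw_wedgeRaw_one_two ρ hA hB₁, wedgeRaw_add_right,
    wedgeRaw_add_left, wedgeRaw_smul_left, wedgeRaw_wedgeRaw_two_of_action hρ]
  abel

theorem bianchi_identity_three {ρh : g →ₗ[ℝ] h →ₗ[ℝ] h} {ρl : g →ₗ[ℝ] l →ₗ[ℝ] l}
    {pf : h →ₗ[ℝ] h →ₗ[ℝ] l}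
    (hρl : ∀ (X X' : g) (Z : l), ρl (br X X') Z = ρl X (ρl X' Z) - ρl X' (ρl X Z))
    (hpf : ∀ (X : g) (Y₁ Y₂ : h), ρl X (pf Y₁ Y₂) = pf (ρh X Y₁) Y₂ + pf Y₁ (ρh X Y₂))
    {B : X → (Fin 2 → X) → h} {C : X → (Fin 3 → X) → l} {Ω₂ : X → (Fin 3 → X) → h}
    {Ω₃ : X → (Fin 4 → X) → l}
    (hA : ∀ w, DifferentiableAt ℝ (fun y => A y w) x)
    (hB : ∀ w, DifferentiableAt ℝ (fun y => B y w) x)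
    (hC : ∀ w, ContDiffAt ℝ 2 (fun y => C y w) x)
    (hΩ₁ : ∀ y, Ω₁ y = extDerivRaw A y + (2 : ℝ)⁻¹ • wedgeRaw br (A y) (A y))
    (hΩ₂ : ∀ y, Ω₂ y = extDerivRaw B y + wedgeRaw ρh (A y) (B y))
    (hΩ₃ : ∀ y, Ω₃ y = extDerivRaw C y + wedgeRaw ρl (A y) (C y) + wedgeRaw pf (B y) (B y)) :
    extDerivRaw Ω₃ x + wedgeRaw ρl (A x) (Ω₃ x)
      = wedgeRaw ρl (Ω₁ x) (C x) + wedgeRaw pf (Ω₂ x) (B x) + wedgeRaw pf (B x) (Ω₂ x) := by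
  obtain rfl : Ω₃ = _ := funext hΩ₃
  have hC₁ w := (hC w).differentiableAt two_ne_zero
  have hdC := differentiableAt_extDerivRaw fun w u => (hC w).differentiableAt_fderiv_apply u
  have hAC := differentiableAt_wedgeRaw ρl hA hC₁
  have hBB := differentiableAt_wedgeRaw pf hB hB
  rw [hΩ₁, hΩ₂, extDerivRaw_add (ω := fun y => extDerivRaw C y + wedgeRaw ρl (A y) (C y))
      (fun w => (hdC w).add (hAC w)) hBB, extDerivRaw_add hdC hAC, extDerivRaw_extDerivRaw_three hC,
    extDerivRaw_wedgeRaw_one_three ρl hA hC₁, extDerivRaw_wedgeRaw_two_two pf hB hB,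
    wedgeRaw_add_right, wedgeRaw_add_right, wedgeRaw_add_left, wedgeRaw_smul_left,
    wedgeRaw_add_left, wedgeRaw_add_right, wedgeRaw_wedgeRaw_three_of_action hρl,
    wedgeRaw_wedgeRaw_of_derivation hpf]
  abel

end Bianchi

theorem stmt17_general {d : ℕ} {g h l : Type*}
    [NormedAddCommGroup g] [NormedSpace ℝ g] [FiniteDimensional ℝ g]
    [NormedAddCommGroup h] [NormedSpace ℝ h] [FiniteDimensional ℝ h]
    [NormedAddCommGroup l] [NormedSpace ℝ l] [FiniteDimensional ℝ l]
    (br : g →ₗ[ℝ] g →ₗ[ℝ] g)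
    (br_alt : ∀ X : g, br X X = 0)
    (br_jacobi : ∀ X Y Z : g, br X (br Y Z) = br (br X Y) Z + br Y (br X Z))
    (ρh : g →ₗ[ℝ] h →ₗ[ℝ] h) (ρl : g →ₗ[ℝ] l →ₗ[ℝ] l)
    (hρh_action : ∀ (X X' : g) (Y : h),
      ρh (br X X') Y = ρh X (ρh X' Y) - ρh X' (ρh X Y))
    (hρl_action : ∀ (X X' : g) (Z : l),
      ρl (br X X') Z = ρl X (ρl X' Z) - ρl X' (ρl X Z))
    (pf : h →ₗ[ℝ] h →ₗ[ℝ] l)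
    (hpf_der : ∀ (X : g) (Y₁ Y₂ : h),
      ρl X (pf Y₁ Y₂) = pf (ρh X Y₁) Y₂ + pf Y₁ (ρh X Y₂))
    (U : Set (Fin d → ℝ)) (hU : IsOpen U)
    (A : (Fin d → ℝ) → AlternatingMap ℝ (Fin d → ℝ) g (Fin 1))
    (B : (Fin d → ℝ) → AlternatingMap ℝ (Fin d → ℝ) h (Fin 2))
    (C : (Fin d → ℝ) → AlternatingMap ℝ (Fin d → ℝ) l (Fin 3))
    (hA : SmoothFormOn A U) (hB : SmoothFormOn B U) (hC : SmoothFormOn C U)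
    (Ω₁ : (Fin d → ℝ) → (Fin 2 → (Fin d → ℝ)) → g)
    (hΩ₁ : ∀ y, Ω₁ y =
      extDerivRaw (fun z => ⇑(A z)) y + (2 : ℝ)⁻¹ • wedgeRaw br ⇑(A y) ⇑(A y))
    (Ω₂ : (Fin d → ℝ) → (Fin 3 → (Fin d → ℝ)) → h)
    (hΩ₂ : ∀ y, Ω₂ y =
      extDerivRaw (fun z => ⇑(B z)) y + wedgeRaw ρh ⇑(A y) ⇑(B y))
    (Ω₃ : (Fin d → ℝ) → (Fin 4 → (Fin d → ℝ)) → l)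
    (hΩ₃ : ∀ y, Ω₃ y =
      extDerivRaw (fun z => ⇑(C z)) y + wedgeRaw ρl ⇑(A y) ⇑(C y)
        + wedgeRaw pf ⇑(B y) ⇑(B y)) :
    ∀ x ∈ U,
      (extDerivRaw Ω₁ x + wedgeRaw br ⇑(A x) (Ω₁ x) = 0)
      ∧ (extDerivRaw Ω₂ x + wedgeRaw ρh ⇑(A x) (Ω₂ x)
          = wedgeRaw ρh (Ω₁ x) ⇑(B x))
      ∧ (extDerivRaw Ω₃ x + wedgeRaw ρl ⇑(A x) (Ω₃ x)
          = wedgeRaw ρl (Ω₁ x) ⇑(C x) + wedgeRaw pf (Ω₂ x) ⇑(B x)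
            + wedgeRaw pf ⇑(B x) (Ω₂ x)) := by
  intro x hx
  have hA₂ := hA.contDiffAt hU hx
  have hB₂ := hB.contDiffAt hU hx
  have hA₁ w := (hA₂ w).differentiableAt two_ne_zero
  have hB₁ w := (hB₂ w).differentiableAt two_ne_zero
  exact ⟨bianchi_identity_one br_alt br_jacobi hA₂ hΩ₁,
    bianchi_identity_two hρh_action hA₁ hB₂ hΩ₁ hΩ₂,
    bianchi_identity_three (B := fun z => ⇑(B z)) (C := fun z => ⇑(C z)) hρl_action hpf_der
      hA₁ hB₁ (hC.contDiffAt hU hx) hΩ₁ hΩ₂ hΩ₃⟩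

/-- let `g` be a finite-dimensional real Lie algebra (bracket `br`,
alternating and Jacobi), `h`, `l` finite-dimensional real vector spaces, `α̃ : h → g`,
`β̃ : l → h` linear, `▷ : g × h → h` and `▷ : g × l → l` bilinear Lie algebra actions,
`{,} : h × h → l` a `g`-equivariant bilinear map
(`X ▷ {Y₁,Y₂} = {X ▷ Y₁, Y₂} + {Y₁, X ▷ Y₂}`), with `α̃(X ▷ Y) = [X, α̃(Y)]` and
`β̃(X ▷ Z) = X ▷ β̃(Z)`. For a smooth `g`-valued 1-form `A`, a smooth `h`-valued 2-form
`B` and a smooth `l`-valued 3-form `C` on an open `U ⊆ ℝ^d`, with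
`Ω₁ := dA + ½ A ∧^{[,]} A`, `Ω₂ := dB + A ∧^▷ B`, `Ω₃ := dC + A ∧^▷ C + B ∧^{{,}} B`,
if `(A, B, C)` is fake-flat, i.e. `Ω₁ = α̃ ∘ B` and `Ω₂ = β̃ ∘ C` on `U`, then on `U`:
(i) `dΩ₁ + A ∧^{[,]} Ω₁ = 0`; (ii) `dΩ₂ + A ∧^▷ Ω₂ = Ω₁ ∧^▷ B`;
(iii) `dΩ₃ + A ∧^▷ Ω₃ = Ω₁ ∧^▷ C + Ω₂ ∧^{{,}} B + B ∧^{{,}} Ω₂`. -/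
theorem stmt17 {d : ℕ} {g h l : Type*}
    [NormedAddCommGroup g] [NormedSpace ℝ g] [FiniteDimensional ℝ g]
    [NormedAddCommGroup h] [NormedSpace ℝ h] [FiniteDimensional ℝ h]
    [NormedAddCommGroup l] [NormedSpace ℝ l] [FiniteDimensional ℝ l]
    (br : g →ₗ[ℝ] g →ₗ[ℝ] g)
    (br_alt : ∀ X : g, br X X = 0)
    (br_jacobi : ∀ X Y Z : g, br X (br Y Z) = br (br X Y) Z + br Y (br X Z))
    (αt : h →ₗ[ℝ] g) (βt : l →ₗ[ℝ] h)
    (ρh : g →ₗ[ℝ] h →ₗ[ℝ] h) (ρl : g →ₗ[ℝ] l →ₗ[ℝ] l)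
    (hρh_action : ∀ (X X' : g) (Y : h),
      ρh (br X X') Y = ρh X (ρh X' Y) - ρh X' (ρh X Y))
    (hρl_action : ∀ (X X' : g) (Z : l),
      ρl (br X X') Z = ρl X (ρl X' Z) - ρl X' (ρl X Z))
    (pf : h →ₗ[ℝ] h →ₗ[ℝ] l)
    (hpf_der : ∀ (X : g) (Y₁ Y₂ : h),
      ρl X (pf Y₁ Y₂) = pf (ρh X Y₁) Y₂ + pf Y₁ (ρh X Y₂))
    (hαρ : ∀ (X : g) (Y : h), αt (ρh X Y) = br X (αt Y))
    (hβρ : ∀ (X : g) (Z : l), βt (ρl X Z) = ρh X (βt Z))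
    (U : Set (Fin d → ℝ)) (hU : IsOpen U)
    (A : (Fin d → ℝ) → AlternatingMap ℝ (Fin d → ℝ) g (Fin 1))
    (B : (Fin d → ℝ) → AlternatingMap ℝ (Fin d → ℝ) h (Fin 2))
    (C : (Fin d → ℝ) → AlternatingMap ℝ (Fin d → ℝ) l (Fin 3))
    (hA : SmoothFormOn A U) (hB : SmoothFormOn B U) (hC : SmoothFormOn C U)
    (Ω₁ : (Fin d → ℝ) → (Fin 2 → (Fin d → ℝ)) → g)
    (hΩ₁ : ∀ y, Ω₁ y =
      extDerivRaw (fun z => ⇑(A z)) y + (2 : ℝ)⁻¹ • wedgeRaw br ⇑(A y) ⇑(A y))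
    (Ω₂ : (Fin d → ℝ) → (Fin 3 → (Fin d → ℝ)) → h)
    (hΩ₂ : ∀ y, Ω₂ y =
      extDerivRaw (fun z => ⇑(B z)) y + wedgeRaw ρh ⇑(A y) ⇑(B y))
    (Ω₃ : (Fin d → ℝ) → (Fin 4 → (Fin d → ℝ)) → l)
    (hΩ₃ : ∀ y, Ω₃ y =
      extDerivRaw (fun z => ⇑(C z)) y + wedgeRaw ρl ⇑(A y) ⇑(C y)
        + wedgeRaw pf ⇑(B y) ⇑(B y))
    (hflat₁ : ∀ x ∈ U, Ω₁ x = fun v => αt (B x v))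
    (hflat₂ : ∀ x ∈ U, Ω₂ x = fun v => βt (C x v)) :
    ∀ x ∈ U,
      (extDerivRaw Ω₁ x + wedgeRaw br ⇑(A x) (Ω₁ x) = 0)
      ∧ (extDerivRaw Ω₂ x + wedgeRaw ρh ⇑(A x) (Ω₂ x)
          = wedgeRaw ρh (Ω₁ x) ⇑(B x))
      ∧ (extDerivRaw Ω₃ x + wedgeRaw ρl ⇑(A x) (Ω₃ x)
          = wedgeRaw ρl (Ω₁ x) ⇑(C x) + wedgeRaw pf (Ω₂ x) ⇑(B x)
            + wedgeRaw pf ⇑(B x) (Ω₂ x)) :=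
  stmt17_general br br_alt br_jacobi ρh ρl hρh_action hρl_action pf hpf_der U hU A B C hA hB hC Ω₁
    hΩ₁ Ω₂ hΩ₂ Ω₃ hΩ₃
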